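/- arXiv:1501.00178 — 8 statements merged into one kernel-verified Lean document; each statement's English description precedes it below -/
import Mathlib

section
/- Let $a = (\mu_{ij})$ be an $n \times n$ lower-triangular real matrix with $\mu_{ii} = 1$ for all $i$ and $|\mu_{ij}| \le 1/2$ for all $j < i$. If $a^{-1} = (\nu_{ij})$, then $|\nu_{ij}| \le 0$ if $i < j$, $|\nu_{ii}| \le 1$, and $|\nu_{ij}| \le \frac{1}{3}(\frac{3}{2})^{i-j}$ if $i > j$. -/
/-!
The inverse `ν` is again unit lower triangular, and the entry `(i, j)`, `j < i`, of `ν * a = 1`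
reads `ν i j = -∑_{j < k ≤ i} ν i k * a k j`, so `|ν i j| ≤ c ∑_{j < k ≤ i} |ν i k|` with
`c = 1/2`. The tail sums `S j = ∑_{j ≤ k ≤ i} |ν i k|` therefore satisfy `S i = 1` and
`S j ≤ (1 + c) S (j + 1)`, whence `S j ≤ (1 + c) ^ (i - j)` and
`|ν i j| ≤ c (1 + c) ^ (i - j - 1) = (1/3) (3/2) ^ (i - j)`.
-/

open Finset Matrix OrderDual

section LowerTriangular

-- `M.BlockTriangular toDual` says `M i j = 0` for `i < j`: `M` is lower triangular.
variable {ι R : Type*} [Fintype ι] [LinearOrder ι]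

theorem Matrix.BlockTriangular.toDual_of_mul_eq_one [DecidableEq ι] [CommRing R]
    {a ν : Matrix ι ι R} (ha : a.BlockTriangular toDual) (h : ν * a = 1) :
    ν.BlockTriangular toDual := by
  have := invertibleOfLeftInverse a ν h
  simpa only [inv_eq_left_inv h] using blockTriangular_inv_of_blockTriangular ha

variable [LocallyFiniteOrder ι]

theorem Matrix.BlockTriangular.mul_apply_eq_sum_Icc [NonUnitalNonAssocSemiring R]
    {a b : Matrix ι ι R} (hb : b.BlockTriangular toDual) (ha : a.BlockTriangular toDual)
    (i j : ι) : (b * a) i j = ∑ k ∈ Icc j i, b i k * a k j := by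
  refine (sum_subset (subset_univ _) fun k _ hk => ?_).symm
  rcases not_and_or.1 (mem_Icc.not.1 hk) with hjk | hki
  · exact mul_eq_zero_of_right _ (ha (not_le.1 hjk))
  · exact mul_eq_zero_of_left (hb (not_le.1 hki)) _

variable [DecidableEq ι] {a ν : Matrix ι ι ℝ} (ha : a.BlockTriangular toDual)
  (hdiag : ∀ i, a i i = 1) (h : ν * a = 1)
include ha hdiag h

theorem Matrix.BlockTriangular.apply_self_eq_one_of_mul_eq_one (i : ι) : ν i i = 1 := by
  simpa [hdiag, h] using ((ha.toDual_of_mul_eq_one h).mul_apply_eq_sum_Icc ha i i).symm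

theorem Matrix.BlockTriangular.abs_apply_le_mul_sum_Ioc_of_mul_eq_one {c : ℝ}
    (hoff : ∀ i j, j < i → |a i j| ≤ c) {i j : ι} (hji : j < i) :
    |ν i j| ≤ c * ∑ k ∈ Ioc j i, |ν i k| := by
  have hsum := (ha.toDual_of_mul_eq_one h).mul_apply_eq_sum_Icc ha i j
  rw [h, one_apply_ne hji.ne', ← sum_Ioc_add_eq_sum_Icc hji.le, hdiag, mul_one,
    eq_comm, add_eq_zero_iff_eq_neg'] at hsum
  calc |ν i j| = |∑ k ∈ Ioc j i, ν i k * a k j| := by rw [hsum, abs_neg]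
    _ ≤ ∑ k ∈ Ioc j i, |ν i k| * c := by
      refine (abs_sum_le_sum_abs _ _).trans (sum_le_sum fun k hk => ?_)
      rw [abs_mul]
      exact mul_le_mul_of_nonneg_left (hoff k j (mem_Ioc.1 hk).1) (abs_nonneg _)
    _ = c * ∑ k ∈ Ioc j i, |ν i k| := by rw [mul_sum]; simp only [mul_comm]

end LowerTriangular

section Recurrence

variable {y : ℕ → ℝ} {c : ℝ} {i : ℕ}

theorem sum_Icc_le_pow_of_le_mul_sum_Ioc (hc : 0 ≤ c) (hi : y i ≤ 1)
    (h : ∀ j < i, y j ≤ c * ∑ k ∈ Ioc j i, y k) {j : ℕ} (hj : j ≤ i) :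
    ∑ k ∈ Icc j i, y k ≤ (1 + c) ^ (i - j) := by
  induction hj using Nat.decreasingInduction with
  | self => simpa using hi
  | of_succ k hk ih =>
    have hyk := h k hk
    rw [← Icc_add_one_left_eq_Ioc] at hyk
    rw [← sum_Ioc_add_eq_sum_Icc hk.le, ← Icc_add_one_left_eq_Ioc,
      show i - k = i - (k + 1) + 1 by omega, pow_succ]
    nlinarith

theorem le_mul_pow_of_le_mul_sum_Ioc (hc : 0 ≤ c) (hi : y i ≤ 1)
    (h : ∀ j < i, y j ≤ c * ∑ k ∈ Ioc j i, y k) {j : ℕ} (hj : j < i) :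
    y j ≤ c * (1 + c) ^ (i - j - 1) := by
  refine (h j hj).trans (mul_le_mul_of_nonneg_left ?_ hc)
  rw [← Icc_add_one_left_eq_Ioc, Nat.sub_sub]
  exact sum_Icc_le_pow_of_le_mul_sum_Ioc hc hi h hj

end Recurrence

theorem Matrix.BlockTriangular.abs_apply_le_mul_pow_of_mul_eq_one {n : ℕ}
    {a ν : Matrix (Fin n) (Fin n) ℝ}
    (ha : a.BlockTriangular toDual) (hdiag : ∀ i, a i i = 1) (h : ν * a = 1) {c : ℝ}
    (hc : 0 ≤ c) (hoff : ∀ i j, j < i → |a i j| ≤ c) {i j : Fin n} (hji : j < i) :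
    |ν i j| ≤ c * (1 + c) ^ ((i : ℕ) - j - 1) := by
  set y : ℕ → ℝ := fun k => if hk : k < n then |ν i ⟨k, hk⟩| else 0
  have hy (k : Fin n) : y k = |ν i k| := dif_pos k.isLt
  have hsum (k : Fin n) : ∑ l ∈ Ioc k i, |ν i l| = ∑ l ∈ Ioc (k : ℕ) i, y l := by
    simp only [← Fin.map_valEmbedding_Ioc, sum_map, Fin.valEmbedding_apply, hy]
  rw [← hy]
  refine le_mul_pow_of_le_mul_sum_Ioc hc ?_ (fun k hk => ?_) hji
  · rw [hy, ha.apply_self_eq_one_of_mul_eq_one hdiag h, abs_one]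
  · have hkn : k < n := hk.trans i.isLt
    rw [← hsum ⟨k, hkn⟩]
    exact (hy ⟨k, hkn⟩).trans_le (ha.abs_apply_le_mul_sum_Ioc_of_mul_eq_one hdiag h hoff hk)

theorem stmt_0_general (n : ℕ) (a ν : Matrix (Fin n) (Fin n) ℝ)
    (hlower : ∀ i j : Fin n, i < j → a i j = 0)
    (hdiag : ∀ i : Fin n, a i i = 1)
    (hoff : ∀ i j : Fin n, j < i → |a i j| ≤ 1 / 2)
    (hinv' : ν * a = 1) :
    (∀ i j : Fin n, i < j → |ν i j| ≤ 0) ∧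
    (∀ i : Fin n, |ν i i| ≤ 1) ∧
    (∀ i j : Fin n, j < i → |ν i j| ≤ (1 / 3) * (3 / 2) ^ ((i : ℕ) - (j : ℕ))) := by
  have ha : a.BlockTriangular toDual := fun i j hij => hlower i j hij
  refine ⟨fun i j hij => ?_, fun i => ?_, fun i j hji => ?_⟩
  · rw [ha.toDual_of_mul_eq_one hinv' hij, abs_zero]
  · rw [ha.apply_self_eq_one_of_mul_eq_one hdiag hinv' i, abs_one]
  · have hd : (i : ℕ) - j - 1 + 1 = i - j := Nat.sub_add_cancel (Nat.sub_pos_of_lt hji)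
    calc |ν i j| ≤ 1 / 2 * (1 + 1 / 2) ^ ((i : ℕ) - j - 1) :=
          ha.abs_apply_le_mul_pow_of_mul_eq_one hdiag hinv' (by norm_num) hoff hji
      _ = 1 / 3 * (3 / 2) ^ ((i : ℕ) - j - 1 + 1) := by rw [pow_succ]; ring
      _ = 1 / 3 * (3 / 2) ^ ((i : ℕ) - j) := by rw [hd]

/-- Lemma on inverses of unit lower-triangular matrices with small entries. -/
theorem stmt_0 (n : ℕ) (a ν : Matrix (Fin n) (Fin n) ℝ)
    (hlower : ∀ i j : Fin n, i < j → a i j = 0)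
    (hdiag : ∀ i : Fin n, a i i = 1)
    (hoff : ∀ i j : Fin n, j < i → |a i j| ≤ 1 / 2)
    (hinv : a * ν = 1) (hinv' : ν * a = 1) :
    (∀ i j : Fin n, i < j → |ν i j| ≤ 0) ∧
    (∀ i : Fin n, |ν i i| ≤ 1) ∧
    (∀ i j : Fin n, j < i → |ν i j| ≤ (1 / 3) * (3 / 2) ^ ((i : ℕ) - (j : ℕ))) :=
  stmt_0_general n a ν hlower hdiag hoff hinv'
end

section
/- If $\{b_1,\ldots,b_n\}$ is an LLL-reduced basis for an integral unimodular lattice $L$ with Gram-Schmidt orthogonalization $\{b_1^*,\ldots,b_n^*\}$, then $2^{1-i} \le |b_i^*|^2 \le 2^{n-i}$ for all $i$. -/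
/-- The Gram–Schmidt orthogonalization of a family of vectors in `ℝⁿ`. -/
noncomputable def gso {n : ℕ} (b : Fin n → EuclideanSpace ℝ (Fin n)) :
    Fin n → EuclideanSpace ℝ (Fin n) :=
  @InnerProductSpace.gramSchmidt ℝ _ _ _ _ (Fin n) inferInstance inferInstance
    (inferInstance : WellFoundedLT (Fin n)) b

/-!
Write `N i = ‖b*_i‖²`. The Gram matrix of `b_1, …, b_k` factors as `μ D μᵀ` with `μ` the
unitriangular matrix of Gram–Schmidt coefficients and `D = diag N`, so `N 1 ⋯ N k` is the Gram
determinant of a sublattice of an integral lattice: a positive integer, equal to `1` for `k = n`.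
The Lovász condition gives `N j ≤ 2 ^ (i - j) * N i` for `j ≤ i`. Hence
`1 ≤ N 1 ⋯ N i ≤ (2 ^ (i - 1) * N i) ^ i`, the lower bound, and
`(2 ^ (i - n) * N i) ^ (n - i + 1) ≤ N i ⋯ N n = (N 1 ⋯ N (i - 1))⁻¹ ≤ 1`,
the upper bound.
-/

open Finset Matrix InnerProductSpace
open scoped RealInnerProductSpace

theorem one_le_det_of_forall_eq_intCast {ι : Type*} [Fintype ι] [DecidableEq ι]
    (A : Matrix ι ι ℝ) (hA : ∀ i j, ∃ z : ℤ, A i j = z) (hpos : 0 < A.det) : 1 ≤ A.det := by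
  choose Z hZ using hA
  have hdet : A.det = ((Matrix.of Z).det : ℝ) := by
    rw [show ((of Z).det : ℝ) = _ from RingHom.map_det (Int.castRingHom ℝ) (of Z)]
    exact congrArg det (Matrix.ext fun i j => hZ i j)
  rw [hdet] at hpos ⊢
  exact_mod_cast (Int.cast_pos.mp hpos : 0 < (Matrix.of Z).det)

section GramSchmidt

variable {E : Type*} [NormedAddCommGroup E] [InnerProductSpace ℝ E]
variable {ι : Type*} [LinearOrder ι] [LocallyFiniteOrderBot ι] [WellFoundedLT ι]

noncomputable def gramSchmidtCoeff (f : ι → E) : Matrix ι ι ℝ :=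
  Matrix.of fun i k =>
    if k < i then ⟪gramSchmidt ℝ f k, f i⟫ / ‖gramSchmidt ℝ f k‖ ^ 2
    else if k = i then 1 else 0

theorem gramSchmidtCoeff_isLowerTriangular (f : ι → E) :
    (gramSchmidtCoeff f).IsLowerTriangular := by
  intro i k (hik : i < k)
  simp [gramSchmidtCoeff, hik.not_gt, hik.ne']

theorem det_gramSchmidtCoeff [Fintype ι] (f : ι → E) : (gramSchmidtCoeff f).det = 1 := by
  rw [det_of_isLowerTriangular _ (gramSchmidtCoeff_isLowerTriangular f)]
  simp [gramSchmidtCoeff]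

theorem sum_gramSchmidtCoeff_smul [Fintype ι] (f : ι → E) (i : ι) :
    ∑ k, gramSchmidtCoeff f i k • gramSchmidt ℝ f k = f i := by
  have hsupp : ∀ k ∉ Iic i, gramSchmidtCoeff f i k • gramSchmidt ℝ f k = 0 := fun k hk => by
    have hik : i < k := not_le.mp (mt mem_Iic.mpr hk)
    simp [gramSchmidtCoeff, hik.not_gt, hik.ne']
  rw [← sum_subset (subset_univ _) fun k _ => hsupp k, ← Iio_insert, sum_insert (by simp),
    gramSchmidt_def'' ℝ f i]
  simp only [gramSchmidtCoeff, of_apply, lt_irrefl, if_false, if_true, one_smul]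
  refine congrArg _ (sum_congr rfl fun k hk => ?_)
  simp [mem_Iio.mp hk]

theorem inner_eq_sum_gramSchmidtCoeff [Fintype ι] (f : ι → E) (i j : ι) :
    ⟪f i, f j⟫ =
      ∑ k, gramSchmidtCoeff f i k * gramSchmidtCoeff f j k * ‖gramSchmidt ℝ f k‖ ^ 2 := by
  conv_lhs => rw [← sum_gramSchmidtCoeff_smul f i, ← sum_gramSchmidtCoeff_smul f j]
  simp_rw [sum_inner, inner_sum, real_inner_smul_left, real_inner_smul_right]
  refine sum_congr rfl fun k _ => ?_
  rw [sum_eq_single k (fun l _ hlk => by rw [gramSchmidt_orthogonal ℝ f hlk.symm]; ring)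
    (by simp), real_inner_self_eq_norm_sq]
  ring

theorem gram_eq_gramSchmidtCoeff_mul [Fintype ι] (f : ι → E) :
    gram ℝ f = gramSchmidtCoeff f * diagonal (fun k => ‖gramSchmidt ℝ f k‖ ^ 2) *
      (gramSchmidtCoeff f)ᵀ := by
  ext i j
  rw [gram_apply, inner_eq_sum_gramSchmidtCoeff, mul_apply]
  simp only [mul_diagonal, transpose_apply]
  exact sum_congr rfl fun k _ => by ring

theorem det_gram_eq_prod_norm_gramSchmidt_sq [Fintype ι] (f : ι → E) :
    (gram ℝ f).det = ∏ k, ‖gramSchmidt ℝ f k‖ ^ 2 := by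
  rw [gram_eq_gramSchmidtCoeff_mul, det_mul, det_mul, det_transpose, det_gramSchmidtCoeff,
    det_diagonal, one_mul, mul_one]

theorem gramSchmidt_comp_castLE {n m : ℕ} (h : n ≤ m) (f : Fin m → E) (i : Fin n) :
    gramSchmidt ℝ (f ∘ Fin.castLE h) i = gramSchmidt ℝ f (Fin.castLE h i) := by
  induction i using WellFoundedLT.induction with
  | _ i ih =>
    rw [gramSchmidt_def, gramSchmidt_def, Fin.sum_Iio_castLE]
    refine congrArg _ (sum_congr rfl fun k hk => ?_)
    rw [ih k (mem_Iio.mp hk), Function.comp_apply]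

theorem one_le_prod_norm_gramSchmidt_sq [Fintype ι] {f : ι → E} (hf : LinearIndependent ℝ f)
    (hint : ∀ i j, ∃ z : ℤ, ⟪f i, f j⟫ = z) : 1 ≤ ∏ k, ‖gramSchmidt ℝ f k‖ ^ 2 := by
  rw [← det_gram_eq_prod_norm_gramSchmidt_sq]
  refine one_le_det_of_forall_eq_intCast _ hint ?_
  rw [det_gram_eq_prod_norm_gramSchmidt_sq]
  exact prod_pos fun k _ => by have := gramSchmidt_ne_zero k hf; positivity

end GramSchmidt

section LovaszChain

variable {N : ℕ → ℝ} {n : ℕ} {α : ℝ}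

theorem le_pow_mul_of_le_mul_succ (hα : 0 ≤ α) (hstep : ∀ j, j + 1 < n → N j ≤ α * N (j + 1))
    {i j : ℕ} (hji : j ≤ i) (hi : i < n) : N j ≤ α ^ (i - j) * N i := by
  induction i, hji using Nat.le_induction with
  | base => simp
  | succ i hji ih =>
    calc N j ≤ α ^ (i - j) * N i := ih (by omega)
      _ ≤ α ^ (i - j) * (α * N (i + 1)) := by gcongr; exact hstep i hi
      _ = α ^ (i + 1 - j) * N (i + 1) := by rw [Nat.sub_add_comm hji, pow_succ]; ring

theorem one_le_pow_mul_of_one_le_prod_range (hα : 1 ≤ α) (hN : ∀ j, 0 ≤ N j)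
    (hstep : ∀ j, j + 1 < n → N j ≤ α * N (j + 1)) {i : ℕ} (hi : i < n)
    (hprefix : 1 ≤ ∏ j ∈ range (i + 1), N j) : 1 ≤ α ^ i * N i := by
  have hle : ∀ j ∈ range (i + 1), N j ≤ α ^ i * N i := fun j hj => by
    have hji : j ≤ i := Nat.lt_succ_iff.mp (mem_range.mp hj)
    calc N j ≤ α ^ (i - j) * N i := le_pow_mul_of_le_mul_succ (by linarith) hstep hji hi
      _ ≤ α ^ i * N i :=
        mul_le_mul_of_nonneg_right (pow_le_pow_right₀ hα (Nat.sub_le i j)) (hN i)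
  have : 1 ≤ (α ^ i * N i) ^ (i + 1) := by
    calc 1 ≤ ∏ j ∈ range (i + 1), N j := hprefix
      _ ≤ ∏ _j ∈ range (i + 1), α ^ i * N i := prod_le_prod (fun j _ => hN j) hle
      _ = (α ^ i * N i) ^ (i + 1) := by rw [prod_const, card_range]
  exact (one_le_pow_iff_of_nonneg (by have := hN i; positivity) i.succ_ne_zero).mp this

theorem le_pow_of_prod_range_eq_one (hα : 1 ≤ α) (hN : ∀ j, 0 ≤ N j)
    (hstep : ∀ j, j + 1 < n → N j ≤ α * N (j + 1)) {i : ℕ} (hi : i < n)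
    (hprefix : 1 ≤ ∏ j ∈ range i, N j) (htotal : ∏ j ∈ range n, N j = 1) :
    N i ≤ α ^ (n - 1 - i) := by
  have htail : ∏ j ∈ Ico i n, N j ≤ 1 := by
    have := prod_range_mul_prod_Ico N hi.le
    nlinarith [prod_nonneg fun j (_ : j ∈ Ico i n) => hN j]
  have hle : ∀ j ∈ Ico i n, N i ≤ α ^ (n - 1 - i) * N j := fun j hj => by
    obtain ⟨hij, hjn⟩ := mem_Ico.mp hj
    calc N i ≤ α ^ (j - i) * N j := le_pow_mul_of_le_mul_succ (by linarith) hstep hij hjn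
      _ ≤ α ^ (n - 1 - i) * N j :=
        mul_le_mul_of_nonneg_right (pow_le_pow_right₀ hα (by omega)) (hN j)
  have : N i ^ (n - i) ≤ (α ^ (n - 1 - i)) ^ (n - i) := by
    calc N i ^ (n - i) = ∏ _j ∈ Ico i n, N i := by rw [prod_const, Nat.card_Ico]
      _ ≤ ∏ j ∈ Ico i n, α ^ (n - 1 - i) * N j := prod_le_prod (fun j _ => hN i) hle
      _ = (α ^ (n - 1 - i)) ^ (n - i) * ∏ j ∈ Ico i n, N j := by
        rw [prod_mul_distrib, prod_const, Nat.card_Ico]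
      _ ≤ (α ^ (n - 1 - i)) ^ (n - i) := by
        have : 0 ≤ α := by linarith
        exact mul_le_of_le_one_right (by positivity) htail
  exact (pow_le_pow_iff_left₀ (hN i) (by positivity) (by omega)).mp this

end LovaszChain

theorem stmt_1_general (n : ℕ) (b : Fin n → EuclideanSpace ℝ (Fin n))
    -- the lattice spanned by `b` is integral:
    (hint : ∀ i j : Fin n, ∃ z : ℤ, (inner ℝ (b i) (b j) : ℝ) = z)
    -- the lattice is unimodular (Gram determinant 1):
    (hdet : (Matrix.of fun i j : Fin n => (inner ℝ (b i) (b j) : ℝ)).det = 1)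
    -- and the Lovász-type condition `‖b*_i‖² ≤ 2‖b*_{i+1}‖²`:
    (hlovasz : ∀ i : Fin n, ∀ h : (i : ℕ) + 1 < n,
      ‖gso b i‖ ^ 2 ≤ 2 * ‖gso b ⟨(i : ℕ) + 1, h⟩‖ ^ 2) :
    -- then `2^(1-i) ≤ ‖b*_i‖² ≤ 2^(n-i)` (here `i` is 0-based, so shifted by 1):
    ∀ i : Fin n, (2 : ℝ) ^ (-(i : ℤ)) ≤ ‖gso b i‖ ^ 2 ∧
      ‖gso b i‖ ^ 2 ≤ (2 : ℝ) ^ ((n : ℤ) - 1 - (i : ℤ)) := by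
  have hli : LinearIndependent ℝ b :=
    linearIndependent_of_det_gram_ne_zero (by rw [gram, hdet]; exact one_ne_zero)
  set N : ℕ → ℝ := fun j => if h : j < n then ‖gso b ⟨j, h⟩‖ ^ 2 else 0
  have hN : ∀ j, 0 ≤ N j := fun j => by dsimp only [N]; split_ifs <;> positivity
  have hprod : ∀ k (hk : k ≤ n),
      ∏ j ∈ range k, N j = ∏ j : Fin k, ‖gramSchmidt ℝ (b ∘ Fin.castLE hk) j‖ ^ 2 := by
    intro k hk
    rw [← Fin.prod_univ_eq_prod_range]
    refine prod_congr rfl fun j _ => ?_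
    rw [gramSchmidt_comp_castLE]
    exact dif_pos (j.isLt.trans_le hk)
  have hprefix : ∀ k ≤ n, 1 ≤ ∏ j ∈ range k, N j := fun k hk => by
    rw [hprod k hk]
    exact one_le_prod_norm_gramSchmidt_sq (hli.comp _ (Fin.castLE_injective hk))
      fun i j => hint _ _
  have htotal : ∏ j ∈ range n, N j = 1 := by
    rw [hprod n le_rfl, ← det_gram_eq_prod_norm_gramSchmidt_sq]
    simpa [gram] using hdet
  have hstep : ∀ j, j + 1 < n → N j ≤ 2 * N (j + 1) := fun j hj => by
    simpa [N, hj, (by omega : j < n)] using hlovasz ⟨j, by omega⟩ hj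
  intro i
  have hNi : N i = ‖gso b i‖ ^ 2 := dif_pos i.isLt
  rw [← hNi, _root_.zpow_neg, zpow_natCast, inv_le_iff_one_le_mul₀' (by positivity),
    show (n : ℤ) - 1 - i = ((n - 1 - i : ℕ) : ℤ) by omega, zpow_natCast]
  exact ⟨one_le_pow_mul_of_one_le_prod_range one_le_two hN hstep i.isLt (hprefix _ i.isLt),
    le_pow_of_prod_range_eq_one one_le_two hN hstep i.isLt (hprefix _ i.isLt.le) htotal⟩

/-- Bounds on the Gram–Schmidt vectors of an LLL-reduced basis of an
integral unimodular lattice. -/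
theorem stmt_1 (n : ℕ) (b : Fin n → EuclideanSpace ℝ (Fin n))
    -- the lattice spanned by `b` is integral:
    (hint : ∀ i j : Fin n, ∃ z : ℤ, (inner ℝ (b i) (b j) : ℝ) = z)
    -- the lattice is unimodular (Gram determinant 1):
    (hdet : (Matrix.of fun i j : Fin n => (inner ℝ (b i) (b j) : ℝ)).det = 1)
    -- the basis is LLL-reduced: size condition on Gram–Schmidt coefficients
    (hsize : ∀ i j : Fin n, j < i →
      |(inner ℝ (b i) (gso b j) : ℝ) / ‖gso b j‖ ^ 2| ≤ 1 / 2)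
    -- and the Lovász-type condition `‖b*_i‖² ≤ 2‖b*_{i+1}‖²`:
    (hlovasz : ∀ i : Fin n, ∀ h : (i : ℕ) + 1 < n,
      ‖gso b i‖ ^ 2 ≤ 2 * ‖gso b ⟨(i : ℕ) + 1, h⟩‖ ^ 2) :
    -- then `2^(1-i) ≤ ‖b*_i‖² ≤ 2^(n-i)` (here `i` is 0-based, so shifted by 1):
    ∀ i : Fin n, (2 : ℝ) ^ (-(i : ℤ)) ≤ ‖gso b i‖ ^ 2 ∧
      ‖gso b i‖ ^ 2 ≤ (2 : ℝ) ^ ((n : ℤ) - 1 - (i : ℤ)) :=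
  stmt_1_general n b hint hdet hlovasz
end

section
/- Let $\{b_1,\ldots,b_n\}$ be an LLL-reduced basis of an integral unimodular lattice $L$, and let $\{c_1,\ldots,c_n\}$ be the dual basis (i.e., $\langle c_i, b_j \rangle = \delta_{ij}$). Then $|c_j|^2 \le (9/2)^{n-1}$ for all $j$. -/
open Finset InnerProductSpace
open scoped RealInnerProductSpace

theorem gso_eq_gramSchmidt {n : ℕ} (b : Fin n → EuclideanSpace ℝ (Fin n)) :
    gso b = gramSchmidt ℝ b := rfl

theorem linearIndependent_of_inner_eq_ite {E : Type*} [NormedAddCommGroup E]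
    [InnerProductSpace ℝ E] {ι : Type*} [Fintype ι] [DecidableEq ι] {b c : ι → E}
    (h : ∀ i j, ⟪c i, b j⟫ = if i = j then 1 else 0) : LinearIndependent ℝ b := by
  refine Fintype.linearIndependent_iff.2 fun g hg i => ?_
  simpa [inner_sum, inner_smul_right, h] using congrArg (⟪c i, ·⟫) hg

section GramSchmidt

variable {E : Type*} [NormedAddCommGroup E] [InnerProductSpace ℝ E]
  {ι : Type*} [LinearOrder ι] [LocallyFiniteOrderBot ι] [WellFoundedLT ι] {b : ι → E}

theorem inner_gramSchmidt_eq_zero_of_forall_le {x : E} {i : ι}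
    (h : ∀ k ≤ i, ⟪x, b k⟫ = 0) : ⟪x, gramSchmidt ℝ b i⟫ = 0 := by
  have : Submodule.span ℝ (b '' Set.Iic i) ≤ LinearMap.ker (innerₛₗ ℝ x) :=
    Submodule.span_le.2 <| by rintro _ ⟨k, hk, rfl⟩; exact h k hk
  exact this (gramSchmidt_mem_span ℝ b le_rfl)

theorem inner_gramSchmidt_eq_sub_sum (x : E) (i : ι) :
    ⟪x, gramSchmidt ℝ b i⟫ = ⟪x, b i⟫ - ∑ k ∈ Iio i,
      ⟪b i, gramSchmidt ℝ b k⟫ / ‖gramSchmidt ℝ b k‖ ^ 2 * ⟪x, gramSchmidt ℝ b k⟫ := by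
  have h := congrArg (⟪x, ·⟫) (gramSchmidt_def'' ℝ b i)
  simp only [inner_add_right, inner_sum, real_inner_smul_right, RCLike.ofReal_real_eq_id, id,
    real_inner_comm (b i)] at h
  linarith [real_inner_comm x (b i)]

theorem norm_sq_eq_sum_inner_gramSchmidt_sq_div [Fintype ι] [FiniteDimensional ℝ E]
    (h : Module.finrank ℝ E = Fintype.card ι) (hb : LinearIndependent ℝ b) (x : E) :
    ‖x‖ ^ 2 = ∑ i, ⟪x, gramSchmidt ℝ b i⟫ ^ 2 / ‖gramSchmidt ℝ b i‖ ^ 2 := by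
  rw [← (gramSchmidtOrthonormalBasis h b).sum_sq_inner_left]
  refine sum_congr rfl fun i _ => ?_
  have hi : gramSchmidtNormed ℝ b i ≠ 0 :=
    ne_zero_of_norm_ne_zero (by rw [gramSchmidtNormed_unit_length i hb]; exact one_ne_zero)
  rw [gramSchmidtOrthonormalBasis_apply h hi, gramSchmidtNormed, real_inner_smul_right,
    RCLike.ofReal_real_eq_id, id, inv_mul_eq_div, div_pow]

section Dual

variable {x : E} {j : ι} (hx : ∀ i, ⟪x, b i⟫ = if j = i then 1 else 0)
include hx

theorem inner_gramSchmidt_eq_zero_of_lt {i : ι} (hij : i < j) : ⟪x, gramSchmidt ℝ b i⟫ = 0 :=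
  inner_gramSchmidt_eq_zero_of_forall_le fun k hk => by
    rw [hx, if_neg (hk.trans_lt hij).ne']

theorem inner_gramSchmidt_self_eq_one : ⟪x, gramSchmidt ℝ b j⟫ = 1 := by
  rw [inner_gramSchmidt_eq_sub_sum, hx, if_pos rfl, sum_eq_zero, sub_zero]
  intro k hk
  rw [inner_gramSchmidt_eq_zero_of_lt hx (mem_Iio.1 hk), mul_zero]

theorem abs_inner_gramSchmidt_le_half_sum {i : ι} (hij : j < i)
    (hsize : ∀ k < i, |⟪b i, gramSchmidt ℝ b k⟫ / ‖gramSchmidt ℝ b k‖ ^ 2| ≤ 1 / 2) :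
    |⟪x, gramSchmidt ℝ b i⟫| ≤ 1 / 2 * ∑ k ∈ Iio i, |⟪x, gramSchmidt ℝ b k⟫| := by
  rw [inner_gramSchmidt_eq_sub_sum, hx, if_neg hij.ne, zero_sub, abs_neg, mul_sum]
  refine (abs_sum_le_sum_abs _ _).trans (sum_le_sum fun k hk => ?_)
  rw [abs_mul]
  exact mul_le_mul_of_nonneg_right (hsize k (mem_Iio.1 hk)) (abs_nonneg _)

end Dual

end GramSchmidt

theorem le_half_mul_three_halves_pow_of_le_half_sum {a : ℕ → ℝ} {j n : ℕ}
    (hlt : ∀ i < j, a i = 0) (hj : a j ≤ 1)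
    (hrec : ∀ i, j < i → i < n → a i ≤ 1 / 2 * ∑ k ∈ range i, a k) {i : ℕ} (hji : j < i)
    (hin : i < n) : a i ≤ 1 / 2 * (3 / 2) ^ (i - j - 1) := by
  have hsum : ∀ i, j < i → i ≤ n → ∑ k ∈ range i, a k ≤ (3 / 2) ^ (i - j - 1) := by
    intro i hji
    induction i, hji using Nat.le_induction with
    | base =>
      intro _
      rw [sum_range_succ, sum_eq_zero fun k hk => hlt k (mem_range.1 hk)]
      simpa
    | succ i hji ih =>
      intro hin
      rw [sum_range_succ, show i + 1 - j - 1 = i - j - 1 + 1 by omega, pow_succ]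
      linarith [hrec i hji hin, ih (by omega)]
  exact (hrec i hji hin).trans (by gcongr; exact hsum i hji hin.le)

theorem sum_range_le_of_le_two_pow_mul_sq {w : ℕ → ℝ} {j n : ℕ} (hjn : j < n)
    (hlt : ∀ i < j, w i = 0) (hj : w j ≤ 2 ^ j)
    (hgt : ∀ i, j < i → i < n → w i ≤ 2 ^ i * (1 / 2 * (3 / 2) ^ (i - j - 1)) ^ 2) :
    ∑ i ∈ range n, w i ≤ 2 ^ j * (9 / 2) ^ (n - 1 - j) := by
  induction n, hjn using Nat.le_induction with
  | base =>
    rw [sum_range_succ, sum_eq_zero fun k hk => hlt k (mem_range.1 hk)]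
    simpa
  | succ m hjm ih =>
    obtain ⟨t, rfl⟩ : ∃ t, m = j + 1 + t := ⟨m - j - 1, by omega⟩
    have hw := hgt (j + 1 + t) (by omega) (by omega)
    have hS := ih fun i hji hin => hgt i hji (by omega)
    simp only [show j + 1 + t - j - 1 = t by omega, show j + 1 + t - 1 - j = t by omega,
      show j + 1 + t + 1 - 1 - j = t + 1 by omega] at hw hS ⊢
    have hterm : (2 : ℝ) ^ (j + 1 + t) * (1 / 2 * (3 / 2) ^ t) ^ 2 = 2 ^ j * (9 / 2) ^ t / 2 := by
      rw [mul_pow, ← pow_mul, pow_add, pow_add, show (9 / 2 : ℝ) = 2 * (3 / 2) ^ 2 by norm_num,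
        mul_pow, ← pow_mul]
      ring
    have hX : (0 : ℝ) ≤ 2 ^ j * (9 / 2) ^ t := by positivity
    rw [hterm] at hw
    rw [sum_range_succ, pow_succ]
    linarith

theorem Fin.sum_Iio_eq_sum_range_extend {M : Type*} [AddCommMonoid M] {n : ℕ} (f : Fin n → M)
    (i : Fin n) : ∑ k ∈ Iio i, f k = ∑ k ∈ range i, Function.extend Fin.val f 0 k := by
  rw [← Nat.Iio_eq_range, ← Fin.map_valEmbedding_Iio, sum_map]
  simp [Fin.val_injective.extend_apply]

theorem Fin.sum_le_of_le_two_pow_mul_sq {n : ℕ} {w : Fin n → ℝ} {j : Fin n}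
    (hlt : ∀ i < j, w i = 0) (hj : w j ≤ 2 ^ (j : ℕ))
    (hgt : ∀ i, j < i → w i ≤ 2 ^ (i : ℕ) * (1 / 2 * (3 / 2) ^ ((i : ℕ) - j - 1)) ^ 2) :
    ∑ i, w i ≤ 2 ^ (j : ℕ) * (9 / 2) ^ (n - 1 - j) := by
  set v := Function.extend Fin.val w 0
  have hv (k : Fin n) : v k = w k := Fin.val_injective.extend_apply _ _ k
  simp only [← hv, Fin.sum_univ_eq_sum_range v]
  refine sum_range_le_of_le_two_pow_mul_sq j.isLt (fun k hk => ?_) (by rw [hv]; exact hj)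
    (fun k hjk hkn => ?_)
  · rw [show k = ((⟨k, hk.trans j.isLt⟩ : Fin n) : ℕ) from rfl, hv]
    exact hlt _ hk
  · rw [show k = ((⟨k, hkn⟩ : Fin n) : ℕ) from rfl, hv]
    exact hgt _ hjk

section LLL

variable {E : Type*} [NormedAddCommGroup E] [InnerProductSpace ℝ E] {n : ℕ} {b : Fin n → E}

theorem abs_inner_gramSchmidt_le_of_inner_eq_ite {x : E} {j i : Fin n}
    (hx : ∀ i, ⟪x, b i⟫ = if j = i then 1 else 0)
    (hsize : ∀ i k : Fin n, k < i →
      |⟪b i, gramSchmidt ℝ b k⟫ / ‖gramSchmidt ℝ b k‖ ^ 2| ≤ 1 / 2) (hji : j < i) :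
    |⟪x, gramSchmidt ℝ b i⟫| ≤ 1 / 2 * (3 / 2) ^ ((i : ℕ) - j - 1) := by
  set a := Function.extend Fin.val (fun k => |⟪x, gramSchmidt ℝ b k⟫|) 0
  have ha (k : Fin n) : a k = |⟪x, gramSchmidt ℝ b k⟫| := Fin.val_injective.extend_apply _ _ k
  rw [← ha]
  refine le_half_mul_three_halves_pow_of_le_half_sum (fun k hk => ?_) ?_ (fun k hjk hkn => ?_)
    hji i.isLt
  · rw [show k = ((⟨k, hk.trans j.isLt⟩ : Fin n) : ℕ) from rfl, ha,
      inner_gramSchmidt_eq_zero_of_lt hx hk, abs_zero]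
  · rw [ha, inner_gramSchmidt_self_eq_one hx, abs_one]
  · rw [show k = ((⟨k, hkn⟩ : Fin n) : ℕ) from rfl, ha, ← Fin.sum_Iio_eq_sum_range_extend]
    exact abs_inner_gramSchmidt_le_half_sum hx hjk (hsize _)

theorem one_le_norm_gramSchmidt_zero_sq (hint : ∀ i j : Fin n, ∃ z : ℤ, ⟪b i, b j⟫ = z)
    (hb : LinearIndependent ℝ b) (hn : 0 < n) : 1 ≤ ‖gramSchmidt ℝ b ⟨0, hn⟩‖ ^ 2 := by
  have h0 : gramSchmidt ℝ b ⟨0, hn⟩ = b ⟨0, hn⟩ := by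
    rw [gramSchmidt_def, Iio_eq_empty.2 fun k _ => Fin.le_def.2 k.val.zero_le, sum_empty,
      sub_zero]
  obtain ⟨z, hz⟩ := hint ⟨0, hn⟩ ⟨0, hn⟩
  have hpos : (0 : ℝ) < z := by
    rw [← hz, real_inner_self_eq_norm_sq]
    exact pow_pos (norm_pos_iff.2 (hb.ne_zero _)) 2
  rw [h0, ← real_inner_self_eq_norm_sq, hz]
  exact_mod_cast (show (0 : ℤ) < z by exact_mod_cast hpos)

theorem one_le_two_pow_mul_norm_gramSchmidt_sq
    (hint : ∀ i j : Fin n, ∃ z : ℤ, ⟪b i, b j⟫ = z) (hb : LinearIndependent ℝ b)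
    (hlovasz : ∀ i : Fin n, ∀ h : (i : ℕ) + 1 < n,
      ‖gramSchmidt ℝ b i‖ ^ 2 ≤ 2 * ‖gramSchmidt ℝ b ⟨(i : ℕ) + 1, h⟩‖ ^ 2)
    (i : Fin n) : 1 ≤ 2 ^ (i : ℕ) * ‖gramSchmidt ℝ b i‖ ^ 2 := by
  obtain ⟨k, hk⟩ := i
  induction k with
  | zero => simpa using one_le_norm_gramSchmidt_zero_sq hint hb hk
  | succ k ih =>
    have hstep := hlovasz ⟨k, by omega⟩ hk
    have h2k : (0 : ℝ) < 2 ^ k := by positivity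
    rw [pow_succ]
    nlinarith [ih (by omega)]

end LLL

theorem stmt_3_general (n : ℕ) (b c : Fin n → EuclideanSpace ℝ (Fin n))
    (hint : ∀ i j : Fin n, ∃ z : ℤ, (inner ℝ (b i) (b j) : ℝ) = z)
    (hsize : ∀ i j : Fin n, j < i →
      |(inner ℝ (b i) (gso b j) : ℝ) / ‖gso b j‖ ^ 2| ≤ 1 / 2)
    (hlovasz : ∀ i : Fin n, ∀ h : (i : ℕ) + 1 < n,
      ‖gso b i‖ ^ 2 ≤ 2 * ‖gso b ⟨(i : ℕ) + 1, h⟩‖ ^ 2)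
    -- `c` is the dual basis: `⟨c_i, b_j⟩ = δ_ij`
    (hdual : ∀ i j : Fin n, (inner ℝ (c i) (b j) : ℝ) = if i = j then 1 else 0) :
    ∀ j : Fin n, ‖c j‖ ^ 2 ≤ (9 / 2 : ℝ) ^ (n - 1) := by
  intro j
  simp only [gso_eq_gramSchmidt] at hsize hlovasz
  have hb : LinearIndependent ℝ b := linearIndependent_of_inner_eq_ite hdual
  have hdiv (i : Fin n) : ⟪c j, gramSchmidt ℝ b i⟫ ^ 2 / ‖gramSchmidt ℝ b i‖ ^ 2 ≤
      2 ^ (i : ℕ) * ⟪c j, gramSchmidt ℝ b i⟫ ^ 2 := by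
    rw [div_le_iff₀ (pow_pos (norm_pos_iff.2 (gramSchmidt_ne_zero i hb)) 2)]
    nlinarith [one_le_two_pow_mul_norm_gramSchmidt_sq hint hb hlovasz i,
      sq_nonneg ⟪c j, gramSchmidt ℝ b i⟫]
  calc ‖c j‖ ^ 2 = ∑ i, ⟪c j, gramSchmidt ℝ b i⟫ ^ 2 / ‖gramSchmidt ℝ b i‖ ^ 2 :=
        norm_sq_eq_sum_inner_gramSchmidt_sq_div (by simp) hb _
    _ ≤ 2 ^ (j : ℕ) * (9 / 2) ^ (n - 1 - j) := by
      refine Fin.sum_le_of_le_two_pow_mul_sq (fun i hij => ?_) ?_ (fun i hji => ?_)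
      · simp [inner_gramSchmidt_eq_zero_of_lt (hdual j) hij]
      · simpa [inner_gramSchmidt_self_eq_one (hdual j)] using hdiv j
      · refine (hdiv i).trans (mul_le_mul_of_nonneg_left ?_ (by positivity))
        rw [← sq_abs]
        gcongr
        exact abs_inner_gramSchmidt_le_of_inner_eq_ite (hdual j) hsize hji
    _ ≤ (9 / 2) ^ (j : ℕ) * (9 / 2) ^ (n - 1 - j) := by gcongr; norm_num
    _ = (9 / 2) ^ (n - 1) := by rw [← pow_add]; congr 1; omega

/-- Bound on the dual basis of an LLL-reduced basis of an integral unimodular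
lattice: `|c_j|² ≤ (9/2)^(n-1)`. -/
theorem stmt_3 (n : ℕ) (b c : Fin n → EuclideanSpace ℝ (Fin n))
    (hint : ∀ i j : Fin n, ∃ z : ℤ, (inner ℝ (b i) (b j) : ℝ) = z)
    (hdet : (Matrix.of fun i j : Fin n => (inner ℝ (b i) (b j) : ℝ)).det = 1)
    (hsize : ∀ i j : Fin n, j < i →
      |(inner ℝ (b i) (gso b j) : ℝ) / ‖gso b j‖ ^ 2| ≤ 1 / 2)
    (hlovasz : ∀ i : Fin n, ∀ h : (i : ℕ) + 1 < n,
      ‖gso b i‖ ^ 2 ≤ 2 * ‖gso b ⟨(i : ℕ) + 1, h⟩‖ ^ 2)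
    -- `c` is the dual basis: `⟨c_i, b_j⟩ = δ_ij`
    (hdual : ∀ i j : Fin n, (inner ℝ (c i) (b j) : ℝ) = if i = j then 1 else 0) :
    ∀ j : Fin n, ‖c j‖ ^ 2 ≤ (9 / 2 : ℝ) ^ (n - 1) :=
  stmt_3_general n b c hint hsize hlovasz hdual
end

section
/- Let $L$ be an integral lattice, $m \ge 3$ an integer, and $C$ a coset of $mL$ in $L$. Then $C$ contains at most one element $x$ with $\langle x, x \rangle = 1$. -/
/-!
If `x - y = m • w` with `w ≠ 0`, then `⟨x - y, x - y⟩ = m² ⟨w, w⟩ ≥ 9`. On the other hand the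
parallelogram law and `⟨x + y, x + y⟩ ≥ 0` give `⟨x - y, x - y⟩ ≤ 2 (⟨x, x⟩ + ⟨y, y⟩) = 4`.
-/

namespace LinearMap

variable {R M : Type*} [AddCommGroup M]

section CommRing

variable [CommRing R] [Module R M]

theorem apply_add_add_apply_sub (B : M →ₗ[R] M →ₗ[R] R) (x y : M) :
    B (x + y) (x + y) + B (x - y) (x - y) = 2 * (B x x + B y y) := by
  simp only [map_add, map_sub, add_apply, sub_apply]
  ring

theorem apply_smul_smul (B : M →ₗ[R] M →ₗ[R] R) (a : R) (x : M) :
    B (a • x) (a • x) = a ^ 2 * B x x := by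
  simp only [map_smul, smul_apply, smul_eq_mul]
  ring

end CommRing

theorem apply_sub_sub_le [CommRing R] [PartialOrder R] [IsOrderedRing R] [Module R M]
    (B : M →ₗ[R] M →ₗ[R] R) (hB : ∀ z, 0 ≤ B z z) (x y : M) :
    B (x - y) (x - y) ≤ 2 * (B x x + B y y) := by
  rw [← B.apply_add_add_apply_sub]
  exact le_add_of_nonneg_left (hB _)

end LinearMap

theorem stmt_5_general (L : Type*) [AddCommGroup L]
    (B : L →ₗ[ℤ] L →ₗ[ℤ] ℤ)
    (hpos : ∀ x : L, x ≠ 0 → 0 < B x x)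
    (m : ℤ) (hm : 3 ≤ m)
    (x y : L) (hcoset : ∃ w : L, x - y = m • w)
    (hx : B x x = 1) (hy : B y y = 1) : x = y := by
  obtain ⟨w, hw⟩ := hcoset
  rcases eq_or_ne w 0 with rfl | hw0
  · rwa [smul_zero, sub_eq_zero] at hw
  have hnonneg : ∀ z, 0 ≤ B z z := fun z ↦ by
    rcases eq_or_ne z 0 with rfl | hz
    · simp
    · exact (hpos z hz).le
  have hupper : B (x - y) (x - y) ≤ 4 := by
    linarith [B.apply_sub_sub_le hnonneg x y]
  have hlower : 9 ≤ B (x - y) (x - y) := by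
    rw [hw, B.apply_smul_smul]
    nlinarith [hpos w hw0]
  linarith

/-- A coset of `mL` in an integral lattice `L` (`m ≥ 3`) contains at most one
vector of length 1. -/
theorem stmt_5 (L : Type*) [AddCommGroup L] [Module.Free ℤ L] [Module.Finite ℤ L]
    (B : L →ₗ[ℤ] L →ₗ[ℤ] ℤ)
    (hsymm : ∀ x y : L, B x y = B y x)
    (hpos : ∀ x : L, x ≠ 0 → 0 < B x x)
    (m : ℤ) (hm : 3 ≤ m)
    (x y : L) (hcoset : ∃ w : L, x - y = m • w)
    (hx : B x x = 1) (hy : B y y = 1) : x = y :=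
  stmt_5_general L B hpos m hm x y hcoset hx hy
end

section
/- Let $L$ be an integral lattice of rank $n$, let $m \ge 2^{n/2} + 1$ be an integer, and let $x, y$ lie in the same coset of $mL$ in $L$. If $\langle x, x \rangle = 1$ and $\langle y, y \rangle \le (2^n - 1)\langle x, x \rangle$, then $y = x$. -/
/-!
Write `x - y = m • w`. If `w ≠ 0`, integrality gives `⟨x - y, x - y⟩ = m² ⟨w, w⟩ ≥ m²`.
On the other hand `⟨y, y⟩ ≤ 2ⁿ - 1 < (m - 1)²`, and Cauchy–Schwarz with `⟨x, x⟩ = 1` gives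
`|⟨x, y⟩| < m - 1`, so `⟨x - y, x - y⟩ = 1 - 2⟨x, y⟩ + ⟨y, y⟩ < 1 + 2(m - 1) + (m - 1)² = m²`.
-/
theorem two_pow_le_sq_of_rpow_half_add_one_le {n : ℕ} {m : ℤ}
    (hm : (2 : ℝ) ^ ((n : ℝ) / 2) + 1 ≤ m) : (2 : ℤ) ^ n ≤ (m - 1) ^ 2 := by
  have hsq : ((2 : ℝ) ^ ((n : ℝ) / 2)) ^ 2 = 2 ^ n := by
    rw [← Real.rpow_mul_natCast zero_le_two, ← Real.rpow_natCast]
    push_cast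
    ring_nf
  have : (2 : ℝ) ^ n ≤ ((m : ℝ) - 1) ^ 2 := by
    rw [← hsq]
    gcongr
    linarith
  exact_mod_cast this

namespace LinearMap.BilinForm

theorem apply_sub_sub_lt_sq {R M : Type*} [CommRing R] [LinearOrder R] [IsStrictOrderedRing R]
    [AddCommGroup M] [Module R M] (B : LinearMap.BilinForm R M) (hs : ∀ x, 0 ≤ B x x)
    (hB : LinearMap.IsSymm B) {m : R} (hm : 1 ≤ m)
    {x y : M} (hx : B x x = 1) (hy : B y y < (m - 1) ^ 2) : B (x - y) (x - y) < m ^ 2 := by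
  have hcs : B x y ^ 2 ≤ B y y := by simpa [hx] using B.apply_sq_le_of_symm hs hB x y
  have hexp : B (x - y) (x - y) = 1 - 2 * B x y + B y y := by
    simp only [map_sub, LinearMap.sub_apply, hx, ← hB.eq y x, RingHom.id_apply]
    ring
  have ht : -(m - 1) < B x y := (abs_lt_of_sq_lt_sq' (hcs.trans_lt hy) (sub_nonneg.mpr hm)).1
  rw [hexp]
  nlinarith

theorem eq_of_sub_eq_smul_of_apply_lt_sq {M : Type*} [AddCommGroup M]
    (B : LinearMap.BilinForm ℤ M) (hp : ∀ x, x ≠ 0 → 0 < B x x) {m : ℤ} {x y w : M}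
    (hw : x - y = m • w) (hlt : B (x - y) (x - y) < m ^ 2) : x = y := by
  simp only [hw, map_smul, LinearMap.smul_apply, smul_eq_mul] at hlt
  have hw0 : w = 0 := by
    by_contra hne
    have : m ^ 2 * 1 ≤ m ^ 2 * B w w := mul_le_mul_of_nonneg_left (hp w hne) (sq_nonneg m)
    linarith
  rw [← sub_eq_zero, hw, hw0, smul_zero]

end LinearMap.BilinForm

theorem stmt_6_general (n : ℕ) (L : Type*) [AddCommGroup L]
    (B : L →ₗ[ℤ] L →ₗ[ℤ] ℤ)
    (hsymm : ∀ x y : L, B x y = B y x)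
    (hpos : ∀ x : L, x ≠ 0 → 0 < B x x)
    (m : ℤ) (hm : (2 : ℝ) ^ ((n : ℝ) / 2) + 1 ≤ (m : ℝ))
    (x y : L) (hcoset : ∃ w : L, x - y = m • w)
    (hx : B x x = 1) (hy : B y y ≤ (2 ^ n - 1) * B x x) : y = x := by
  obtain ⟨w, hw⟩ := hcoset
  have hm_one : 1 ≤ m := by
    have : (1 : ℝ) ≤ 2 ^ ((n : ℝ) / 2) + 1 := le_add_of_nonneg_left (by positivity)
    exact_mod_cast this.trans hm
  have hy_lt : B y y < (m - 1) ^ 2 := by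
    rw [hx, mul_one] at hy
    linarith [two_pow_le_sq_of_rpow_half_add_one_le hm]
  have hs : ∀ v, 0 ≤ B v v := fun v => by
    rcases eq_or_ne v 0 with rfl | hv
    · simp
    · exact (hpos v hv).le
  have hlt := LinearMap.BilinForm.apply_sub_sub_lt_sq B hs ⟨hsymm⟩ hm_one hx hy_lt
  exact (LinearMap.BilinForm.eq_of_sub_eq_smul_of_apply_lt_sq B hpos hw hlt).symm

/-- In an integral lattice of rank `n`, if `m ≥ 2^(n/2) + 1`, `x` has length 1
and `y` is in the coset `x + mL` with `⟨y,y⟩ ≤ (2ⁿ-1)⟨x,x⟩`, then `y = x`. -/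
theorem stmt_6 (n : ℕ) (L : Type*) [AddCommGroup L] [Module.Free ℤ L] [Module.Finite ℤ L]
    (hrank : Module.finrank ℤ L = n)
    (B : L →ₗ[ℤ] L →ₗ[ℤ] ℤ)
    (hsymm : ∀ x y : L, B x y = B y x)
    (hpos : ∀ x : L, x ≠ 0 → 0 < B x x)
    (m : ℤ) (hm : (2 : ℝ) ^ ((n : ℝ) / 2) + 1 ≤ (m : ℝ))
    (x y : L) (hcoset : ∃ w : L, x - y = m • w)
    (hx : B x x = 1) (hy : B y y ≤ (2 ^ n - 1) * B x x) : y = x :=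
  stmt_6_general n L B hsymm hpos m hm x y hcoset hx hy
end

section
/- Let $G$ be a finite abelian group with an element $u$ of order 2 and let $K$ be a subfield of ${\mathbb C}$. Then the intersection of the kernels of all ring homomorphisms $K\langle G \rangle \to {\mathbb C}$ is zero, where $K\langle G \rangle = K[G]/(u+1)$. -/
/-!
A character `ψ : G → ℂ` with `ψ u = -1` induces a ring homomorphism `K⟨G⟩ → ℂ`. So if `f ∈ K[G]`
represents `x`, then `(1 - u) f` is killed by every character of `G`: by those with `ψ u = 1`
because of the factor `1 - ψ u`, and by the others because of the hypothesis on `x`. Characters of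
a finite abelian group separate the points of its group algebra (orthogonality), hence `u f = f`,
and then `f = (u + 1) (f / 2)` lies in the ideal `(u + 1)`.
-/

/-- The ideal `(u+1)` of the group ring `A[G]`. -/
noncomputable def modIdeal (A : Type*) [CommRing A] (G : Type*) [CommGroup G] (u : G) :
    Ideal (MonoidAlgebra A G) :=
  Ideal.span {MonoidAlgebra.single u 1 + 1}

/-- The modified group ring `A⟨G⟩ = A[G]/(u+1)`. -/
noncomputable abbrev ModGR (A : Type*) [CommRing A] (G : Type*) [CommGroup G] (u : G) :=
  MonoidAlgebra A G ⧸ modIdeal A G u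

/-- The scaled trace `t : A⟨G⟩ → A`, sending (the class of) `∑ a_σ σ` to `a_1 - a_u`. -/
noncomputable def tr {A : Type*} [CommRing A] {G : Type*} [CommGroup G] {u : G}
    (hu : u * u = 1) (x : ModGR A G u) : A :=
  Quotient.liftOn' x (fun f => f.coeff 1 - f.coeff u) (by
    intro f g h
    have h' : -f + g ∈ modIdeal A G u := QuotientAddGroup.leftRel_apply.mp h
    have hfg : g - f ∈ modIdeal A G u := by
      have : -f + g = g - f := by abel
      rwa [this] at h'
    obtain ⟨w, hw⟩ := Ideal.mem_span_singleton.mp hfg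
    have huinv : u⁻¹ = u := inv_eq_of_mul_eq_one_right hu
    have key : ∀ y : G, g.coeff y - f.coeff y = w.coeff (u⁻¹ * y) + w.coeff y := by
      intro y
      rw [← Finsupp.sub_apply, ← MonoidAlgebra.coeff_sub, hw, add_mul, one_mul,
        MonoidAlgebra.coeff_add, Finsupp.add_apply,
        MonoidAlgebra.coeff_single_mul_apply, one_mul]
    have e1 := key 1
    have e2 := key u
    rw [mul_one, huinv] at e1
    rw [inv_mul_cancel] at e2
    show f.coeff 1 - f.coeff u = g.coeff 1 - g.coeff u
    linear_combination e2 - e1)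

open Finset

theorem AddChar.eq_zero_of_forall_sum_mul_eq_zero {α : Type*} [AddCommGroup α] [Fintype α]
    {f : α → ℂ} (hf : ∀ ψ : AddChar α ℂ, ∑ a, f a * ψ a = 0) : f = 0 := by
  classical
  funext b
  have hinv : ∑ ψ : AddChar α ℂ, (ψ b)⁻¹ * ∑ a, f a * ψ a = Fintype.card α * f b :=
    calc ∑ ψ : AddChar α ℂ, (ψ b)⁻¹ * ∑ a, f a * ψ a
        = ∑ a, f a * ∑ ψ : AddChar α ℂ, ψ (a - b) := by
          simp_rw [mul_sum, map_sub_eq_div, div_eq_mul_inv]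
          rw [sum_comm]
          exact sum_congr rfl fun _ _ => sum_congr rfl fun _ _ => by ring
      _ = Fintype.card α * f b := by simp [AddChar.sum_apply_eq_ite, sub_eq_zero, mul_comm]
  simpa [hf, Fintype.card_ne_zero] using hinv

namespace MonoidAlgebra

theorem lift_apply_eq_sum {R A G : Type*} [CommSemiring R] [Semiring A] [Algebra R A]
    [Monoid G] [Fintype G] (ψ : G →* A) (f : MonoidAlgebra R G) :
    lift R A G ψ f = ∑ σ, algebraMap R A (f.coeff σ) * ψ σ := by
  simp [lift_apply, Finsupp.sum_fintype, Algebra.smul_def]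

theorem eq_zero_of_forall_lift_eq_zero {R G : Type*} [CommSemiring R] [Algebra R ℂ]
    (hR : Function.Injective (algebraMap R ℂ)) [CommGroup G] [Fintype G] {f : MonoidAlgebra R G}
    (hf : ∀ ψ : G →* ℂ, lift R ℂ G ψ f = 0) : f = 0 := by
  have hcoeff : (fun σ : Additive G => algebraMap R ℂ (f.coeff σ.toMul)) = 0 :=
    AddChar.eq_zero_of_forall_sum_mul_eq_zero fun ψ => by
      have := hf
        { toFun := fun σ => ψ (.ofMul σ), map_one' := ψ.map_zero_eq_one,
          map_mul' := fun _ _ => ψ.map_add_eq_mul _ _ }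
      rw [lift_apply_eq_sum] at this
      exact (Fintype.sum_equiv Additive.ofMul _ _ fun _ => rfl).symm.trans this
  ext σ
  exact hR ((congrFun hcoeff (.ofMul σ)).trans (map_zero _).symm)

end MonoidAlgebra

section ModGR

variable {A : Type*} [CommRing A] {G : Type*} [CommGroup G] {u : G}

theorem mem_modIdeal_of_single_mul_eq (h2 : IsUnit (2 : A)) {f : MonoidAlgebra A G}
    (hf : MonoidAlgebra.single u 1 * f = f) : f ∈ modIdeal A G u := by
  obtain ⟨v, hv⟩ := h2.map (algebraMap A (MonoidAlgebra A G))
  have hv' : (v : MonoidAlgebra A G) = 2 := by rw [hv, map_ofNat]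
  rw [modIdeal, Ideal.mem_span_singleton']
  refine ⟨↑v⁻¹ * f, ?_⟩
  calc ↑v⁻¹ * f * (MonoidAlgebra.single u 1 + 1)
      = ↑v⁻¹ * ((v : MonoidAlgebra A G) * f) := by
        rw [hv']; linear_combination (↑v⁻¹ : MonoidAlgebra A G) * hf
    _ = f := by rw [← mul_assoc, Units.inv_mul, one_mul]

noncomputable def modGRLift {B : Type*} [CommRing B] [Algebra A B] (ψ : G →* B)
    (hψ : ψ u = -1) : ModGR A G u →+* B :=
  Ideal.Quotient.lift _ (MonoidAlgebra.lift A B G ψ).toRingHom fun a ha => by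
    obtain ⟨w, rfl⟩ := Ideal.mem_span_singleton'.mp ha
    simp [hψ]

theorem modGRLift_mk {B : Type*} [CommRing B] [Algebra A B] (ψ : G →* B) (hψ : ψ u = -1)
    (f : MonoidAlgebra A G) :
    modGRLift ψ hψ (Ideal.Quotient.mk _ f) = MonoidAlgebra.lift A B G ψ f :=
  rfl

end ModGR

theorem stmt_9_general (G : Type*) [CommGroup G] [Fintype G] (u : G)
    (hu2 : u * u = 1) (K : Subfield ℂ) (x : ModGR K G u)
    (hx : ∀ φ : ModGR K G u →+* ℂ, φ x = 0) : x = 0 := by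
  obtain ⟨f, rfl⟩ := Ideal.Quotient.mk_surjective x
  rw [Ideal.Quotient.eq_zero_iff_mem]
  refine mem_modIdeal_of_single_mul_eq (isUnit_iff_ne_zero.mpr two_ne_zero) ?_
  refine (sub_eq_zero.mp (MonoidAlgebra.eq_zero_of_forall_lift_eq_zero
    (algebraMap K ℂ).injective fun ψ => ?_)).symm
  have hψu : ψ u * ψ u = 1 := by rw [← map_mul, hu2, map_one]
  rw [map_sub, map_mul, MonoidAlgebra.lift_single, one_smul]
  rcases mul_self_eq_one_iff.mp hψu with hψ | hψ
  · rw [hψ, one_mul, sub_self]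
  · rw [← modGRLift_mk ψ hψ, hx, mul_zero, sub_zero]

/-- The intersection of the kernels of all ring homomorphisms `K⟨G⟩ → ℂ` is zero. -/
theorem stmt_9 (G : Type*) [CommGroup G] [Fintype G] (u : G) (hu1 : u ≠ 1)
    (hu2 : u * u = 1) (K : Subfield ℂ) (x : ModGR K G u)
    (hx : ∀ φ : ModGR K G u →+* ℂ, φ x = 0) : x = 0 :=
  stmt_9_general G u hu2 K x hx
end

section
/- Let $G$ be a finite abelian group with element $u$ of order 2, with $n = \#G/2$, and let $S$ be a set of coset representatives of $G/\langle u \rangle$. In $A\langle G \rangle = A[G]/(u+1)$ for a commutative ring $A$: if $a = \sum_{\sigma \in S} a_\sigma \sigma$, then $t(a\bar{a}) = \sum_{\sigma \in S} a_\sigma^2$, where $\bar{a} = \sum_\sigma a_\sigma \sigma^{-1}$ and $t$ is the scaled trace. -/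
/-! Since `S` contains exactly one of `σ, uσ` for each `σ`, the coefficient of `u` in
`a ā = ∑_{s,t ∈ S} a_s a_t s t⁻¹` vanishes and that of `1` is `∑ a_s²`; the trace is their
difference. -/

open Finset

theorem MonoidAlgebra.coeff_sum_single_mul_sum_single_inv {A G : Type*} [Semiring A]
    [Group G] [DecidableEq G] (S : Finset G) (c d : G → A) (g : G) :
    ((∑ s ∈ S, single s (c s)) * ∑ t ∈ S, single t⁻¹ (d t) : MonoidAlgebra A G).coeff g =
      ∑ s ∈ S, ∑ t ∈ S, if s * t⁻¹ = g then c s * d t else 0 := by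
  simp only [sum_mul_sum, single_mul_single, coeff_sum, Finset.sum_apply', coeff_single,
    Finsupp.single_apply]

theorem MonoidAlgebra.coeff_one_sum_single_mul_sum_single_inv {A G : Type*} [Semiring A]
    [Group G] (S : Finset G) (c d : G → A) :
    ((∑ s ∈ S, single s (c s)) * ∑ t ∈ S, single t⁻¹ (d t) : MonoidAlgebra A G).coeff 1 =
      ∑ s ∈ S, c s * d s := by
  classical
  rw [coeff_sum_single_mul_sum_single_inv]
  refine sum_congr rfl fun s hs => ?_
  simp only [mul_inv_eq_one, sum_ite_eq, if_pos hs]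

theorem MonoidAlgebra.coeff_sum_single_mul_sum_single_inv_eq_zero {A G : Type*}
    [Semiring A] [Group G] {S : Finset G} {g : G} (hS : ∀ s ∈ S, ∀ t ∈ S, s * t⁻¹ ≠ g)
    (c d : G → A) :
    ((∑ s ∈ S, single s (c s)) * ∑ t ∈ S, single t⁻¹ (d t) : MonoidAlgebra A G).coeff g = 0 := by
  classical
  rw [coeff_sum_single_mul_sum_single_inv]
  exact sum_eq_zero fun s hs => sum_eq_zero fun t ht => if_neg (hS s hs t ht)

theorem mul_inv_ne_of_mem_of_existsUnique {G : Type*} [Group G] {u : G} (hu : u ≠ 1)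
    {S : Finset G} (hS : ∀ g : G, ∃! s, s ∈ S ∧ (g = s ∨ g = u * s))
    {s t : G} (hs : s ∈ S) (ht : t ∈ S) : s * t⁻¹ ≠ u := by
  intro hst
  rw [mul_inv_eq_iff_eq_mul] at hst
  have hts : t = s := (hS s).unique ⟨ht, Or.inr hst⟩ ⟨hs, Or.inl rfl⟩
  rw [hts, right_eq_mul] at hst
  exact hu hst

theorem tr_mk {A G : Type*} [CommRing A] [CommGroup G] {u : G} (hu : u * u = 1)
    (f : MonoidAlgebra A G) :
    tr hu (Ideal.Quotient.mk (modIdeal A G u) f) = f.coeff 1 - f.coeff u :=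
  rfl

theorem stmt_11_general (A : Type*) [CommRing A] (G : Type*) [CommGroup G]
    (u : G) (hu1 : u ≠ 1) (hu2 : u * u = 1)
    (S : Finset G) (hS : ∀ g : G, ∃! s, s ∈ S ∧ (g = s ∨ g = u * s))
    (c : G → A) :
    tr hu2
      ((∑ s ∈ S, Ideal.Quotient.mk (modIdeal A G u) (MonoidAlgebra.single s (c s))) *
        (∑ s ∈ S, Ideal.Quotient.mk (modIdeal A G u) (MonoidAlgebra.single s⁻¹ (c s)))) =
      ∑ s ∈ S, c s ^ 2 := by
  rw [← map_sum, ← map_sum, ← map_mul, tr_mk,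
    MonoidAlgebra.coeff_one_sum_single_mul_sum_single_inv,
    MonoidAlgebra.coeff_sum_single_mul_sum_single_inv_eq_zero
      (fun s hs t ht => mul_inv_ne_of_mem_of_existsUnique hu1 hS hs ht), sub_zero]
  simp only [sq]

/-- If `a = ∑_{σ ∈ S} a_σ σ` then `t(a·ā) = ∑_{σ ∈ S} a_σ²`, where `S` is a set
of coset representatives of `G/⟨u⟩`. -/
theorem stmt_11 (A : Type*) [CommRing A] (G : Type*) [CommGroup G] [Fintype G]
    (u : G) (hu1 : u ≠ 1) (hu2 : u * u = 1)
    (S : Finset G) (hS : ∀ g : G, ∃! s, s ∈ S ∧ (g = s ∨ g = u * s))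
    (c : G → A) :
    tr hu2
      ((∑ s ∈ S, Ideal.Quotient.mk (modIdeal A G u) (MonoidAlgebra.single s (c s))) *
        (∑ s ∈ S, Ideal.Quotient.mk (modIdeal A G u) (MonoidAlgebra.single s⁻¹ (c s)))) =
      ∑ s ∈ S, c s ^ 2 :=
  stmt_11_general A G u hu1 hu2 S hS c
end

section
/- Let $L$ be an invertible $G$-lattice and $e \in L$ with $\langle e, e \rangle = 1$. Then the stabilizer $\{\sigma \in G : \sigma e = e\}$ is trivial, and $\langle e, \sigma e \rangle$ equals $1$ if $\sigma = 1$, $-1$ if $\sigma = u$, and $0$ for all other $\sigma \in G$. -/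
/-!
Let `H` be the stabilizer of a unit vector `e` and `m = #H`. Since `u` acts as `-1`, the orbit map
of a vector whose orbit generates `L/mL` is a surjection `(ℤ/m)[G] → L/mL` killing `1 + u`; as both
`(ℤ/m)[G]/(1 + u)` and `L/mL` have `m ^ (#G/2)` elements, it identifies them. Because `u ∉ H`,
this module is free over `(ℤ/m)[H]`, so its `H`-fixed vectors are norms `∑_{h ∈ H} h x`.
Hence `e ≡ ∑_{h ∈ H} h x (mod mL)`, and `⟨e, e⟩ ≡ ⟨∑ h x, ∑ h x⟩ = m ⟨x, ∑ h x⟩ ≡ 0 (mod m)`;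
as `⟨e, e⟩ = 1`, `H` is trivial. For the inner products, Cauchy–Schwarz gives `⟨e, f⟩ = 0` for
unit vectors `f ≠ ±e`, and `σ e = -e = u e` forces `σ = u`.
-/

/-- A `G`-lattice `(L, B, ρ)` is *invertible* if it has rank `#G/2`, is
unimodular, and for every `m > 0` there is `e_m ∈ L` whose `G`-orbit generates
`L/mL` as an abelian group. -/
def GInvertible (G : Type*) [CommGroup G] [Fintype G] (u : G) (L : Type*)
    [AddCommGroup L] (B : L →ₗ[ℤ] L →ₗ[ℤ] ℤ) (ρ : G →* (L ≃ₗ[ℤ] L)) : Prop :=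
  (Module.finrank ℤ L = Fintype.card G / 2) ∧
  (Function.Bijective fun x : L => B x) ∧
  (∀ m : ℕ, 0 < m → ∃ e : L,
    Submodule.span ℤ
      ((Set.range fun σ : G => ρ σ e) ∪ (Set.range fun y : L => (m : ℤ) • y)) = ⊤)

open Cardinal Submodule

section PositiveDefinite

variable {L : Type*} [AddCommGroup L] {B : L →ₗ[ℤ] L →ₗ[ℤ] ℤ}

theorem eq_of_apply_eq_one (hsymm : ∀ x y : L, B x y = B y x)
    (hpos : ∀ x : L, x ≠ 0 → 0 < B x x) {x y : L} (hx : B x x = 1) (hy : B y y = 1)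
    (hxy : B x y = 1) : x = y := by
  by_contra hne
  have := hpos (x - y) (sub_ne_zero.2 hne)
  simp only [map_sub, LinearMap.sub_apply, hx, hy, hxy, hsymm y x] at this
  omega

theorem apply_eq_zero_of_ne_of_ne_neg (hsymm : ∀ x y : L, B x y = B y x)
    (hpos : ∀ x : L, x ≠ 0 → 0 < B x x) {x y : L} (hx : B x x = 1) (hy : B y y = 1)
    (hxy : x ≠ y) (hxy' : x ≠ -y) : B x y = 0 := by
  have hnonneg (z : L) : 0 ≤ B z z := by
    rcases eq_or_ne z 0 with rfl | hz
    · simp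
    · exact (hpos z hz).le
  have hCS := LinearMap.BilinForm.apply_sq_le_of_symm B hnonneg ⟨hsymm⟩ x y
  rw [hx, hy, mul_one, sq_le_one_iff_abs_le_one, Int.abs_le_one_iff] at hCS
  rcases hCS with h | h | h
  · exact h
  · exact absurd (eq_of_apply_eq_one hsymm hpos hx hy h) hxy
  · exact absurd (eq_of_apply_eq_one hsymm hpos hx (by simpa using hy) (by simp [h])) hxy'

-- Finite rank alone does not make a `ℤ`-module finitely generated (`ℚ` has rank one); a positive
-- definite form does, by pairing against a maximal independent set.
theorem exists_finite_injective_pi_flip (hpos : ∀ x : L, x ≠ 0 → 0 < B x x)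
    (hrank : Module.rank ℤ L < ℵ₀) :
    ∃ s : Set L, s.Finite ∧ Function.Injective (LinearMap.pi fun i : s => B.flip i) := by
  obtain ⟨s, hind, hmax⟩ := exists_maximal_linearIndepOn ℤ (id : L → L)
  refine ⟨s, Cardinal.lt_aleph0_iff_set_finite.1
    (hind.linearIndependent.cardinal_le_rank.trans_lt hrank), ?_⟩
  rw [← LinearMap.ker_eq_bot, eq_bot_iff]
  intro x hx
  have hspan : span ℤ (id '' s) ≤ LinearMap.ker (B x) := by
    rw [span_le]
    rintro _ ⟨i, hi, rfl⟩
    exact congrFun hx ⟨i, hi⟩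
  have hvanish (z : L) : B x z = 0 := by
    by_cases hz : z ∈ s
    · exact congrFun hx ⟨z, hz⟩
    obtain ⟨a, ha, haz⟩ := hmax z hz
    have := hspan haz
    rw [LinearMap.mem_ker, map_smul, smul_eq_mul] at this
    exact (mul_eq_zero.1 this).resolve_left ha
  by_contra hne
  exact (hpos x hne).ne' (hvanish x)

theorem nonempty_basis_of_posDef (hpos : ∀ x : L, x ≠ 0 → 0 < B x x) {n : ℕ} (hn : n ≠ 0)
    (hrank : Module.finrank ℤ L = n) : Nonempty (Module.Basis (Fin n) ℤ L) := by
  have hrank' : Module.rank ℤ L < ℵ₀ :=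
    (Cardinal.toNat_ne_zero.1 (by rwa [← Module.finrank, hrank])).2
  obtain ⟨s, hs, hinj⟩ := exists_finite_injective_pi_flip hpos hrank'
  have := hs.to_subtype
  have := Module.Finite.of_injective _ hinj
  have := hinj.moduleIsTorsionFree _ (map_smul _)
  exact ⟨Module.finBasisOfFinrankEq ℤ L hrank⟩

end PositiveDefinite

section Cosets

variable {G : Type*} [CommGroup G] {A : Type*}

theorem exists_sum_mul_eq_of_forall_mul_eq [AddCommMonoid A] (H : Subgroup G) [Fintype H]
    (g : G → A) (hg : ∀ h ∈ H, ∀ τ, g (h * τ) = g τ) :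
    ∃ d : G → A, ∀ τ, ∑ h : H, d (h * τ) = g τ := by
  classical
  refine ⟨fun τ => if (τ : G ⧸ H).out = τ then g τ else 0, fun τ => ?_⟩
  obtain ⟨h₀, hh₀⟩ := QuotientGroup.mk_out_eq_mul H τ
  have hmk (h : H) : ((h * τ : G) : G ⧸ H) = τ := by
    rw [QuotientGroup.eq, mul_inv_rev, mul_comm τ⁻¹, inv_mul_cancel_right]
    exact H.inv_mem h.2
  have hiff (h : H) : τ * h₀ = h * τ ↔ h = h₀ := by
    rw [mul_comm τ, mul_left_inj, eq_comm, Subtype.coe_inj]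
  calc ∑ h : H, (if ((h * τ : G) : G ⧸ H).out = h * τ then g (h * τ) else 0)
      = ∑ h : H, if h = h₀ then g τ else 0 := by
        refine Finset.sum_congr rfl fun h _ => ?_
        simp only [hmk, hh₀, hiff, hg h h.2]
    _ = g τ := by simp

theorem eq_one_or_eq_of_mem_zpowers {v x : G} (hv : v * v = 1)
    (hx : x ∈ Subgroup.zpowers v) : x = 1 ∨ x = v := by
  obtain ⟨k, rfl⟩ := Subgroup.mem_zpowers_iff.1 hx
  rw [zpow_eq_zpow_emod k (n := 2) (by rw [zpow_two, hv])]
  rcases Int.emod_two_eq_zero_or_one k with h | h <;> simp [h]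

theorem exists_sub_eq_of_antisymm [AddCommGroup A] {v : G} (hv : v ≠ 1) (hv2 : v * v = 1)
    (f : G → A) (hf : ∀ q, f (v * q) = -f q) :
    ∃ g : G → A, ∀ q, g (v * q) - g q = f q := by
  classical
  refine ⟨fun q => if (q : G ⧸ Subgroup.zpowers v).out = q then -f q else 0, fun q => ?_⟩
  have hmk : ((v * q : G) : G ⧸ Subgroup.zpowers v) = q := by
    rw [QuotientGroup.eq, mul_inv_rev, mul_comm q⁻¹, inv_mul_cancel_right]
    exact Subgroup.inv_mem _ (Subgroup.mem_zpowers v)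
  have hvq : v * q ≠ q := by simpa using hv
  obtain ⟨⟨k, hk⟩, hout⟩ := QuotientGroup.mk_out_eq_mul (Subgroup.zpowers v) q
  simp only [hmk, hout]
  rcases eq_one_or_eq_of_mem_zpowers hv2 hk with hk1 | hkv
  · simp [hk1, hvq.symm]
  · simp [hkv, mul_comm q v, hv, hf]

theorem exists_sum_sub_sum_eq [AddCommGroup A] (H : Subgroup G) [Fintype H] {u : G} (hu : u ∉ H)
    (hu2 : u * u = 1) (c : G → A) (hcH : ∀ h ∈ H, ∀ τ, c (h * τ) = c τ)
    (hcu : ∀ τ, c (u * τ) = -c τ) :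
    ∃ d : G → A, ∀ τ, ∑ h : H, d (h * (u * τ)) - ∑ h : H, d (h * τ) = c τ := by
  have hc_mk (τ : G) : c (τ : G ⧸ H).out = c τ := by
    obtain ⟨h, hh⟩ := QuotientGroup.mk_out_eq_mul H τ
    rw [hh, mul_comm, hcH h h.2]
  obtain ⟨g, hg⟩ := exists_sub_eq_of_antisymm (v := (u : G ⧸ H))
    (by rwa [Ne, QuotientGroup.eq_one_iff])
    (by rw [← QuotientGroup.mk_mul, hu2, QuotientGroup.mk_one])
    (fun q => c q.out) fun q => QuotientGroup.induction_on q fun τ => by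
      rw [← QuotientGroup.mk_mul, hc_mk, hc_mk, hcu]
  obtain ⟨d, hd⟩ := exists_sum_mul_eq_of_forall_mul_eq H (fun τ => g τ) fun h hh τ => by
    rw [QuotientGroup.mk_mul, (QuotientGroup.eq_one_iff (h : G)).2 hh, one_mul]
  exact ⟨d, fun τ => by rw [hd, hd, QuotientGroup.mk_mul, hg, hc_mk]⟩

end Cosets

section Involution

variable {G : Type*} [CommGroup G] [Fintype G] {u : G}

theorem linearCombination_eq_zero_of_symm (hu : u ≠ 1) (hu2 : u * u = 1) {R M : Type*}
    [Semiring R] [AddCommGroup M] [Module R M] {w : G → M} (hw : ∀ τ, w (u * τ) = -w τ)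
    {a : G → R} (ha : ∀ τ, a (u * τ) = a τ) : Fintype.linearCombination R w a = 0 := by
  rw [Fintype.linearCombination_apply]
  refine Finset.sum_involution (fun τ _ => u * τ) (fun τ _ => ?_) (fun τ _ _ => ?_)
    (fun _ _ => Finset.mem_univ _) (fun τ _ => ?_)
  · rw [ha, hw, smul_neg, add_neg_cancel]
  · simpa using hu
  · rw [← mul_assoc, hu2, one_mul]

theorem symm_of_map_eq_zero (hu : u ≠ 1) (hu2 : u * u = 1) {n : ℕ}
    (hG : Fintype.card G = 2 * n) {R : Type*} [AddCommGroup R] [Finite R]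
    (ψ : (G → R) →+ (Fin n → R)) (hψ : Function.Surjective ψ)
    (hsymm : ∀ a, (∀ τ, a (u * τ) = a τ) → ψ a = 0) {a : G → R} (ha : ψ a = 0) :
    ∀ τ, a (u * τ) = a τ := by
  set U := Subgroup.zpowers u
  let π : (G ⧸ U → R) →+ (G → R) :=
    (LinearMap.funLeft ℤ R (QuotientGroup.mk : G → G ⧸ U)).toAddMonoidHom
  have hπ : Function.Injective π :=
    LinearMap.funLeft_injective_of_surjective ℤ R _ QuotientGroup.mk_surjective
  have hπ_symm (f : G ⧸ U → R) (τ : G) : π f (u * τ) = π f τ := by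
    show f (u * τ : G) = f τ
    rw [QuotientGroup.mk_mul, (QuotientGroup.eq_one_iff u).2 (Subgroup.mem_zpowers u), one_mul]
  have hcardQ : Nat.card (G ⧸ U) = n := by
    have h := Subgroup.card_eq_card_quotient_mul_card_subgroup U
    rw [Nat.card_zpowers, orderOf_eq_prime (p := 2) (by rw [sq, hu2]) hu, Nat.card_eq_fintype_card,
      hG] at h
    omega
  have hcard : Nat.card ψ.ker ≤ Nat.card π.range := by
    have h := AddSubgroup.card_eq_card_quotient_mul_card_addSubgroup ψ.ker
    rw [Nat.card_congr (QuotientAddGroup.quotientKerEquivOfSurjective ψ hψ).toEquiv] at h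
    rw [← Nat.card_congr (AddMonoidHom.ofInjective hπ).toEquiv]
    simp only [Nat.card_fun, Nat.card_eq_fintype_card (α := G), hG, hcardQ, Nat.card_fin,
      pow_mul', sq] at h ⊢
    exact (Nat.eq_of_mul_eq_mul_left (pow_pos Nat.card_pos n) h).ge
  have hker : a ∈ π.range := by
    rw [AddSubgroup.eq_of_le_of_card_ge (by rintro _ ⟨f, rfl⟩; exact hsymm _ (hπ_symm f)) hcard]
    exact ha
  obtain ⟨f, rfl⟩ := hker
  exact hπ_symm f

end Involution

section Reduction

variable {L : Type*} [AddCommGroup L] {ι : Type*} [Finite ι]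

noncomputable def Module.Basis.reduceMod (b : Module.Basis ι ℤ L) (m : ℕ) : L →+ (ι → ZMod m) :=
  ((Int.castAddHom (ZMod m)).compLeft ι).comp b.equivFun.toAddMonoidHom

namespace Module.Basis

variable (b : Module.Basis ι ℤ L) (m : ℕ)

theorem reduceMod_surjective : Function.Surjective (b.reduceMod m) := by
  intro w
  refine ⟨b.equivFun.symm fun i => (w i).cast, funext fun i => ?_⟩
  simp [reduceMod]

theorem reduceMod_eq_zero_iff (x : L) : b.reduceMod m x = 0 ↔ ∃ y, x = (m : ℤ) • y := by
  constructor
  · intro hx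
    have hdvd (i : ι) : (m : ℤ) ∣ b.equivFun x i :=
      (ZMod.intCast_zmod_eq_zero_iff_dvd _ m).1 (congrFun hx i)
    refine ⟨b.equivFun.symm fun i => b.equivFun x i / m, b.equivFun.injective ?_⟩
    rw [map_zsmul, LinearEquiv.apply_symm_apply]
    funext i
    rw [Pi.smul_apply, smul_eq_mul, Int.mul_ediv_cancel' (hdvd i)]
  · rintro ⟨y, rfl⟩
    funext i
    simp [reduceMod]

end Module.Basis

theorem AddMonoidHom.map_linearCombination_int {α M R : Type*} [Fintype α] [Ring R]
    [AddCommGroup M] [Module R M] (φ : L →+ M) (w : α → L) (a : α → ℤ) :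
    φ (Fintype.linearCombination ℤ w a) =
      Fintype.linearCombination R (φ ∘ w) fun i => (a i : R) := by
  simp [Fintype.linearCombination_apply, map_sum, map_zsmul, Int.cast_smul_eq_zsmul]

theorem exists_eq_linearCombination_add_smul {α : Type*} [Fintype α] {w : α → L} {m : ℤ}
    (hspan : span ℤ (Set.range w ∪ Set.range fun y : L => m • y) = ⊤) (x : L) :
    ∃ (a : α → ℤ) (y : L), x = Fintype.linearCombination ℤ w a + m • y := by
  have hx : x ∈ span ℤ (Set.range w ∪ Set.range fun y : L => m • y) := hspan ▸ mem_top
  have hsmul : span ℤ (Set.range fun y : L => m • y) ≤ LinearMap.range (m • LinearMap.id) :=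
    span_le.2 fun _ ⟨y, hy⟩ => ⟨y, hy⟩
  rw [span_union, mem_sup, ← Fintype.range_linearCombination] at hx
  obtain ⟨_, ⟨a, rfl⟩, _, hz, rfl⟩ := hx
  obtain ⟨y, rfl⟩ := hsmul hz
  exact ⟨a, y, rfl⟩

end Reduction

section GLattice

variable {G : Type*} [CommGroup G] {L : Type*} [AddCommGroup L] (ρ : G →* (L ≃ₗ[ℤ] L))

theorem linearCombination_mul_left [Fintype G] (v : L) (a : G → ℤ) (g : G) :
    Fintype.linearCombination ℤ (fun τ => ρ τ v) (fun τ => a (g * τ)) =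
      ρ g⁻¹ (Fintype.linearCombination ℤ (fun τ => ρ τ v) a) := by
  simp only [Fintype.linearCombination_apply, map_sum, map_zsmul, ← LinearEquiv.mul_apply,
    ← map_mul]
  exact Fintype.sum_equiv (Equiv.mulLeft g) _ _ fun τ => by simp

theorem sum_apply_linearCombination [Fintype G] (H : Subgroup G) [Fintype H] (v : L)
    (a : G → ℤ) :
    ∑ h : H, ρ h (Fintype.linearCombination ℤ (fun τ => ρ τ v) a) =
      Fintype.linearCombination ℤ (fun τ => ρ τ v) fun τ => ∑ h : H, a (h * τ) := by
  rw [← Fintype.sum_equiv (Equiv.inv H)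
    (fun h => Fintype.linearCombination ℤ (fun τ => ρ τ v) fun τ => a (h * τ)) _
    fun h => by simp [linearCombination_mul_left], ← map_sum, Finset.sum_fn]

theorem apply_sum_of_mem (H : Subgroup G) [Fintype H] (x : L) {g : G} (hg : g ∈ H) :
    ρ g (∑ h : H, ρ h x) = ∑ h : H, ρ h x := by
  simp only [map_sum, ← LinearEquiv.mul_apply, ← map_mul]
  exact Fintype.sum_equiv (Equiv.mulLeft (⟨g, hg⟩ : H)) _ _ fun h => rfl

theorem apply_sum_eq_card_mul {B : L →ₗ[ℤ] L →ₗ[ℤ] ℤ}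
    (hρB : ∀ (σ : G) (x y : L), B (ρ σ x) (ρ σ y) = B x y) (H : Subgroup G) [Fintype H]
    (x : L) {y : L} (hy : ∀ h ∈ H, ρ h y = y) :
    B (∑ h : H, ρ h x) y = Fintype.card H * B x y := by
  calc B (∑ h : H, ρ h x) y = ∑ h : H, B (ρ h x) y := by rw [map_sum, LinearMap.sum_apply]
    _ = ∑ h : H, B (ρ h x) (ρ h y) := Finset.sum_congr rfl fun h _ => by rw [hy h h.2]
    _ = Fintype.card H * B x y := by simp [hρB]

variable {u : G}

theorem reduceMod_linearCombination_eq_zero_iff [Fintype G] (hu : u ≠ 1) (hu2 : u * u = 1)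
    (hρu : ∀ x : L, ρ u x = -x) {n : ℕ} (hG : Fintype.card G = 2 * n)
    (b : Module.Basis (Fin n) ℤ L) {m : ℕ} [NeZero m] {v : L}
    (hspan : span ℤ ((Set.range fun σ : G => ρ σ v) ∪ Set.range fun y : L => (m : ℤ) • y) = ⊤)
    (a : G → ℤ) :
    b.reduceMod m (Fintype.linearCombination ℤ (fun τ => ρ τ v) a) = 0 ↔
      ∀ τ, (a (u * τ) : ZMod m) = a τ := by
  let ψ := (Fintype.linearCombination (ZMod m) fun τ => b.reduceMod m (ρ τ v)).toAddMonoidHom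
  have hψ_symm (a' : G → ZMod m) (ha' : ∀ τ, a' (u * τ) = a' τ) : ψ a' = 0 :=
    linearCombination_eq_zero_of_symm hu hu2 (fun τ => by simp [hρu]) ha'
  have hψ_surj : Function.Surjective ψ := by
    intro w
    obtain ⟨x, rfl⟩ := b.reduceMod_surjective m w
    obtain ⟨a', y, rfl⟩ := exists_eq_linearCombination_add_smul hspan x
    refine ⟨fun τ => a' τ, ?_⟩
    rw [map_add, ((b.reduceMod_eq_zero_iff m _).2 ⟨y, rfl⟩), add_zero,
      AddMonoidHom.map_linearCombination_int (R := ZMod m)]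
    rfl
  rw [AddMonoidHom.map_linearCombination_int (R := ZMod m)]
  change ψ (fun τ => (a τ : ZMod m)) = 0 ↔ _
  exact ⟨symm_of_map_eq_zero hu hu2 hG ψ hψ_surj hψ_symm, hψ_symm fun τ => (a τ : ZMod m)⟩

end GLattice

section Stabilizer

variable {G : Type*} [CommGroup G] [Fintype G] {L : Type*} [AddCommGroup L]
  (ρ : G →* (L ≃ₗ[ℤ] L)) {u : G}

theorem exists_eq_sum_add_smul (hu2 : u * u = 1) (hρu : ∀ x : L, ρ u x = -x) {n : ℕ}
    (hG : Fintype.card G = 2 * n) (b : Module.Basis (Fin n) ℤ L) (H : Subgroup G) [Fintype H]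
    (huH : u ∉ H) {e : L} (hH : ∀ h ∈ H, ρ h e = e) {v : L}
    (hspan : span ℤ ((Set.range fun σ : G => ρ σ v) ∪
      Set.range fun y : L => (Fintype.card H : ℤ) • y) = ⊤) :
    ∃ x z : L, e = ∑ h : H, ρ h x + (Fintype.card H : ℤ) • z := by
  set m := Fintype.card H
  have : NeZero m := ⟨Fintype.card_ne_zero⟩
  set lc := Fintype.linearCombination ℤ fun τ => ρ τ v
  have hker := reduceMod_linearCombination_eq_zero_iff ρ
    (fun hu : u = 1 => huH (hu ▸ H.one_mem)) hu2 hρu hG b hspan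
  obtain ⟨a, y, hay⟩ := exists_eq_linearCombination_add_smul hspan e
  -- As `H` fixes `e`, translating `a` by `h ∈ H` changes it by a `u`-symmetric function mod `m`.
  have hc (h : G) (hh : h ∈ H) (τ : G) :
      ((a (u * (h * τ)) : ZMod m) - a (h * τ)) = (a (u * τ) : ZMod m) - a τ := by
    have hlc : lc ((fun τ => a (h * τ)) - a) = (m : ℤ) • (y - ρ h⁻¹ y) := by
      rw [map_sub, linearCombination_mul_left, eq_sub_of_add_eq hay.symm, map_sub, map_zsmul,
        hH _ (H.inv_mem hh), smul_sub]
      abel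
    have := (hker _).1 ((b.reduceMod_eq_zero_iff m _).2 ⟨_, hlc⟩) τ
    simp only [Pi.sub_apply, Int.cast_sub] at this
    rw [mul_left_comm, sub_eq_sub_iff_sub_eq_sub]
    exact this
  obtain ⟨d, hd⟩ := exists_sum_sub_sum_eq H huH hu2 (fun τ => (a (u * τ) : ZMod m) - a τ) hc
    fun τ => by rw [← mul_assoc, hu2, one_mul, neg_sub]
  choose dZ hdZ using fun τ => ZMod.intCast_surjective (d τ)
  obtain ⟨z, hz⟩ := (b.reduceMod_eq_zero_iff m _).1
    ((hker (a - fun τ => ∑ h : H, dZ (h * τ))).2 fun τ => by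
      simp only [Pi.sub_apply, Int.cast_sub, Int.cast_sum, hdZ]
      rw [sub_eq_sub_iff_sub_eq_sub]
      exact (hd τ).symm)
  refine ⟨lc dZ, z + y, ?_⟩
  rw [sum_apply_linearCombination, smul_add, ← hz, hay, map_sub]
  abel

theorem card_dvd_apply_self {B : L →ₗ[ℤ] L →ₗ[ℤ] ℤ}
    (hρB : ∀ (σ : G) (x y : L), B (ρ σ x) (ρ σ y) = B x y) (hu2 : u * u = 1)
    (hρu : ∀ x : L, ρ u x = -x) {n : ℕ} (hG : Fintype.card G = 2 * n)
    (b : Module.Basis (Fin n) ℤ L) (H : Subgroup G) [Fintype H] (huH : u ∉ H) {e : L}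
    (hH : ∀ h ∈ H, ρ h e = e) {v : L}
    (hspan : span ℤ ((Set.range fun σ : G => ρ σ v) ∪
      Set.range fun y : L => (Fintype.card H : ℤ) • y) = ⊤) :
    (Fintype.card H : ℤ) ∣ B e e := by
  obtain ⟨x, z, rfl⟩ := exists_eq_sum_add_smul ρ hu2 hρu hG b H huH hH hspan
  have hN := apply_sum_eq_card_mul ρ hρB H x fun g hg => apply_sum_of_mem ρ H x hg
  refine ⟨B x (∑ h : H, ρ h x) + B (∑ h : H, ρ h x) z + B z (∑ h : H, ρ h x) +
    Fintype.card H * B z z, ?_⟩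
  simp only [map_add, map_zsmul, LinearMap.add_apply, LinearMap.smul_apply, hN, smul_eq_mul]
  ring

end Stabilizer

theorem eq_one_of_apply_eq_self {G : Type*} [CommGroup G] [Fintype G] {u : G} {L : Type*}
    [AddCommGroup L] {B : L →ₗ[ℤ] L →ₗ[ℤ] ℤ} (hpos : ∀ x : L, x ≠ 0 → 0 < B x x)
    (ρ : G →* (L ≃ₗ[ℤ] L)) (hρB : ∀ (σ : G) (x y : L), B (ρ σ x) (ρ σ y) = B x y)
    (hu2 : u * u = 1) (hρu : ∀ x : L, ρ u x = -x)
    (hrank : Module.finrank ℤ L = Fintype.card G / 2)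
    (hgen : ∀ m : ℕ, 0 < m → ∃ v : L, span ℤ
      ((Set.range fun σ : G => ρ σ v) ∪ Set.range fun y : L => (m : ℤ) • y) = ⊤)
    {e : L} (he : B e e = 1) {σ : G} (hσ : ρ σ e = e) : σ = 1 := by
  classical
  let H := (MulAction.stabilizer (L ≃ₗ[ℤ] L) e).comap ρ
  have hH : ∀ h ∈ H, ρ h e = e := fun _ hh => hh
  have huH : u ∉ H := fun hu => by
    have := congrArg (B e) (hH u hu)
    rw [hρu, map_neg, he] at this
    omega
  have hG : Fintype.card G = 2 * (Fintype.card G / 2) :=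
    (Nat.mul_div_cancel' (orderOf_eq_prime (by rw [sq, hu2])
      (fun hu : u = 1 => huH (hu ▸ H.one_mem)) ▸ orderOf_dvd_card)).symm
  obtain ⟨b⟩ := nonempty_basis_of_posDef hpos (by have := Fintype.card_pos (α := G); omega) hrank
  obtain ⟨v, hv⟩ := hgen (Fintype.card H) Fintype.card_pos
  have hdvd := card_dvd_apply_self ρ hρB hu2 hρu hG b H huH hH hv
  rw [he] at hdvd
  have hbot : H = ⊥ := Subgroup.eq_bot_of_card_eq H <| by
    rw [Nat.card_eq_fintype_card]
    exact_mod_cast Int.eq_one_of_dvd_one (Int.natCast_nonneg _) hdvd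
  exact Subgroup.mem_bot.1 (hbot ▸ hσ)

theorem stmt_14_general (G : Type*) [CommGroup G] [Fintype G] [DecidableEq G]
    (u : G) (hu2 : u * u = 1)
    (L : Type*) [AddCommGroup L]
    (B : L →ₗ[ℤ] L →ₗ[ℤ] ℤ)
    (hsymm : ∀ x y : L, B x y = B y x)
    (hpos : ∀ x : L, x ≠ 0 → 0 < B x x)
    (ρ : G →* (L ≃ₗ[ℤ] L))
    (hρB : ∀ (σ : G) (x y : L), B (ρ σ x) (ρ σ y) = B x y)
    (hρu : ∀ x : L, ρ u x = -x)
    (hinv : GInvertible G u L B ρ)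
    (e : L) (he : B e e = 1) :
    (∀ σ : G, ρ σ e = e → σ = 1) ∧
    (∀ σ : G, B e (ρ σ e) = if σ = 1 then 1 else if σ = u then -1 else 0) := by
  obtain ⟨hrank, -, hgen⟩ := hinv
  have hstab (σ : G) (hσ : ρ σ e = e) : σ = 1 :=
    eq_one_of_apply_eq_self hpos ρ hρB hu2 hρu hrank hgen he hσ
  refine ⟨hstab, fun σ => ?_⟩
  split_ifs with hσ1 hσu
  · rw [hσ1, map_one]
    exact he
  · rw [hσu, hρu, map_neg, he]
  · refine apply_eq_zero_of_ne_of_ne_neg hsymm hpos he (by rw [hρB, he])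
      (fun h => hσ1 (hstab σ h.symm)) fun h => hσu ?_
    have huσ := hstab (u * σ) (by rw [map_mul, LinearEquiv.mul_apply, hρu, ← h])
    calc σ = u * (u * σ) := by rw [← mul_assoc, hu2, one_mul]
      _ = u := by rw [huσ, mul_one]

/-- If `e` is a short vector of an invertible `G`-lattice, then its stabilizer
in `G` is trivial and `⟨e, σe⟩` is `1, -1, 0` according as `σ = 1`, `σ = u`, or
otherwise. -/
theorem stmt_14 (G : Type*) [CommGroup G] [Fintype G] [DecidableEq G]
    (u : G) (hu1 : u ≠ 1) (hu2 : u * u = 1)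
    (L : Type*) [AddCommGroup L]
    (B : L →ₗ[ℤ] L →ₗ[ℤ] ℤ)
    (hsymm : ∀ x y : L, B x y = B y x)
    (hpos : ∀ x : L, x ≠ 0 → 0 < B x x)
    (ρ : G →* (L ≃ₗ[ℤ] L))
    (hρB : ∀ (σ : G) (x y : L), B (ρ σ x) (ρ σ y) = B x y)
    (hρu : ∀ x : L, ρ u x = -x)
    (hinv : GInvertible G u L B ρ)
    (e : L) (he : B e e = 1) :
    (∀ σ : G, ρ σ e = e → σ = 1) ∧
    (∀ σ : G, B e (ρ σ e) = if σ = 1 then 1 else if σ = u then -1 else 0) :=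
  stmt_14_general G u hu2 L B hsymm hpos ρ hρB hρu hinv e he
end
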